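/- arXiv:2403.00408 — 3 statements merged into one kernel-verified Lean document; each statement's English description precedes it below -/
import Mathlib

section
/- Let k,k' ≥ 1, p,p' ≥ 1 with gcd(p,q) = gcd(p',q') = 1, and suppose Φ ∈ GL(2,ℤ) satisfies f_{k,p,q}(Φ b) = f_{k',p',q'}(b) for all b in an open dense subset of some neighbourhood of 0 in ℝ², where f_{k,p,q}(b) = min{b₁, b₁(1−kpq)+b₂kp²}. Then k = k', p = p', and q ≡ ±q' mod p. -/
/-- The germ function `f_{k,p,q}(b) = min{b₁, b₁(1−kpq) + b₂kp²}`. -/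
noncomputable def f (k p q : ℤ) (b : ℝ × ℝ) : ℝ :=
  min b.1 (b.1 * (1 - (k : ℝ) * (p : ℝ) * (q : ℝ)) + b.2 * ((k : ℝ) * (p : ℝ) ^ 2))

/-- The linear action on ℝ² of an integer 2×2 matrix. -/
def apply2 (Φ : Matrix (Fin 2) (Fin 2) ℤ) (b : ℝ × ℝ) : ℝ × ℝ :=
  ((Φ 0 0 : ℝ) * b.1 + (Φ 0 1 : ℝ) * b.2, (Φ 1 0 : ℝ) * b.1 + (Φ 1 1 : ℝ) * b.2)

/-!
Both sides are minima of two continuous linear forms, hence positively homogeneous, so agreement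
on a dense subset of a neighbourhood of `0` propagates to all of `ℝ²`. A minimum of two linear forms
determines the pair up to order: `min + max` recovers their sum and `max - min` the absolute value
of their difference, which fixes the difference up to sign. With the forms of `f k p q` as the rows
of `M = !![1, 0; 1 - kpq, kp²]`, this says that `MΦ` is `M'` or `M'` with its rows swapped.
Determinants give `kp² = k'p'²` (as `det Φ = ±1`) and the first column gives
`kp² ∣ kpq - k'p'(±q')`. Multiplying by `p'` and cancelling `kp` leaves `pp'A = qp' - p(±q')`,
so `p ∣ p'` and `p' ∣ p` by coprimality; hence `p = p'`, `k = k'` and `q ≡ ±q' [ZMOD p]`.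
-/

open Filter Topology Matrix

section LinearForms

variable {𝕜 E : Type*} [Field 𝕜] [LinearOrder 𝕜] [IsStrictOrderedRing 𝕜] [AddCommGroup E]
  [Module 𝕜 E]

theorem LinearMap.eq_or_eq_neg_of_abs_apply_eq {φ ψ : E →ₗ[𝕜] 𝕜} (h : ∀ x, |φ x| = |ψ x|) :
    φ = ψ ∨ φ = -ψ := by
  by_contra! hne
  obtain ⟨x, hx⟩ := DFunLike.ne_iff.mp hne.1
  obtain ⟨y, hy⟩ := DFunLike.ne_iff.mp hne.2
  rw [LinearMap.neg_apply] at hy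
  have hx' : φ x = -ψ x := (abs_eq_abs.mp (h x)).resolve_left hx
  have hy' : φ y = ψ y := (abs_eq_abs.mp (h y)).resolve_right hy
  rcases abs_eq_abs.mp (h (x + y)) with hxy | hxy <;> rw [map_add, map_add] at hxy
  · exact hx (by linarith)
  · exact hy (by linarith)

theorem LinearMap.eq_or_swap_of_min_apply_eq {l₁ l₂ m₁ m₂ : E →ₗ[𝕜] 𝕜}
    (h : ∀ x, min (l₁ x) (l₂ x) = min (m₁ x) (m₂ x)) :
    (l₁ = m₁ ∧ l₂ = m₂) ∨ (l₁ = m₂ ∧ l₂ = m₁) := by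
  have hmax : ∀ x, max (l₁ x) (l₂ x) = max (m₁ x) (m₂ x) := fun x => by
    simpa only [map_neg, min_neg_neg, neg_inj] using h (-x)
  have hsum : ∀ x, l₁ x + l₂ x = m₁ x + m₂ x := fun x => by
    rw [← min_add_max, h, hmax, min_add_max]
  have habs : ∀ x, |(l₂ - l₁) x| = |(m₂ - m₁) x| := fun x => by
    rw [LinearMap.sub_apply, LinearMap.sub_apply, ← max_sub_min_eq_abs, h, hmax,
      max_sub_min_eq_abs]
  rcases eq_or_eq_neg_of_abs_apply_eq habs with hd | hd
  · left
    constructor <;> ext x <;> have := LinearMap.congr_fun hd x <;>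
      simp only [LinearMap.sub_apply] at this <;> linarith [hsum x]
  · right
    constructor <;> ext x <;> have := LinearMap.congr_fun hd x <;>
      simp only [LinearMap.sub_apply, LinearMap.neg_apply] at this <;> linarith [hsum x]

end LinearForms

theorem eq_of_eventuallyEq_of_posHomogeneous {E : Type*} [AddCommMonoid E] [Module ℝ E]
    [TopologicalSpace E] [ContinuousSMul ℝ E] {F G : E → ℝ}
    (hF : ∀ c : ℝ, 0 < c → ∀ x, F (c • x) = c * F x)
    (hG : ∀ c : ℝ, 0 < c → ∀ x, G (c • x) = c * G x) (h : F =ᶠ[𝓝 0] G) : F = G := by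
  funext x
  have hlim : Tendsto (fun c : ℝ => c • x) (𝓝[>] 0) (𝓝 0) := by
    have hcont : Continuous fun c : ℝ => c • x := continuous_id.smul continuous_const
    simpa using (hcont.tendsto 0).mono_left nhdsWithin_le_nhds
  obtain ⟨c, hcx, hc⟩ := ((hlim.eventually h).and self_mem_nhdsWithin).exists
  exact mul_left_cancel₀ (ne_of_gt hc) (by rw [← hF c hc, ← hG c hc]; exact hcx)

theorem ContinuousLinearMap.eq_or_swap_of_min_apply_eq_near_zero {E : Type*} [AddCommGroup E]
    [Module ℝ E] [TopologicalSpace E] [ContinuousSMul ℝ E] {l₁ l₂ m₁ m₂ : E →L[ℝ] ℝ}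
    {U D : Set E} (hU : U ∈ 𝓝 0) (hD : U ⊆ closure D)
    (h : ∀ x ∈ D, min (l₁ x) (l₂ x) = min (m₁ x) (m₂ x)) :
    (l₁ = m₁ ∧ l₂ = m₂) ∨ (l₁ = m₂ ∧ l₂ = m₁) := by
  have hom : ∀ l l' : E →L[ℝ] ℝ, ∀ c : ℝ, 0 < c → ∀ x,
      min (l (c • x)) (l' (c • x)) = c * min (l x) (l' x) := fun l l' c hc x => by
    simp only [map_smul, smul_eq_mul, mul_min_of_nonneg _ _ hc.le]
  have hnear : (fun x => min (l₁ x) (l₂ x)) =ᶠ[𝓝 0] fun x => min (m₁ x) (m₂ x) :=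
    mem_of_superset hU fun x hx =>
      Set.EqOn.closure h (l₁.continuous.min l₂.continuous) (m₁.continuous.min m₂.continuous)
        (hD hx)
  have hall := eq_of_eventuallyEq_of_posHomogeneous (hom l₁ l₂) (hom m₁ m₂) hnear
  simpa only [← ContinuousLinearMap.coe_inj] using
    LinearMap.eq_or_swap_of_min_apply_eq (l₁ := (l₁ : E →ₗ[ℝ] ℝ)) (l₂ := l₂) (m₁ := m₁) (m₂ := m₂)
      (congrFun hall)

theorem Int.eq_and_modEq_of_mul_sq_eq_of_dvd {k k' p p' q r : ℤ} (hk : k ≠ 0) (hp : 0 < p)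
    (hp' : 0 < p') (hpq : IsCoprime p q) (hpr : IsCoprime p' r) (hsq : k * p ^ 2 = k' * p' ^ 2)
    (hdvd : k * p ^ 2 ∣ k * p * q - k' * p' * r) : k = k' ∧ p = p' ∧ q ≡ r [ZMOD p] := by
  obtain ⟨A, hA⟩ := hdvd
  have key : p * p' * A = q * p' - p * r :=
    mul_left_cancel₀ (mul_ne_zero hk hp.ne') (by linear_combination (-p') * hA + r * hsq)
  obtain rfl : p = p' := Int.dvd_antisymm hp.le hp'.le
    (hpq.dvd_of_dvd_mul_left ⟨p' * A + r, by linear_combination -key⟩)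
    (hpr.dvd_of_dvd_mul_right ⟨q - p * A, by linear_combination key⟩)
  refine ⟨mul_right_cancel₀ (pow_ne_zero 2 hp.ne') hsq, rfl, ?_⟩
  have hqr : p * A = q - r := mul_left_cancel₀ hp.ne' (by linear_combination key)
  exact (Int.modEq_iff_dvd.mpr ⟨A, by linear_combination -hqr⟩).symm

def germMatrix (k p q : ℤ) : Matrix (Fin 2) (Fin 2) ℤ := !![1, 0; 1 - k * p * q, k * p ^ 2]

noncomputable def rowForm (v : Fin 2 → ℤ) : ℝ × ℝ →L[ℝ] ℝ :=
  (v 0 : ℝ) • ContinuousLinearMap.fst ℝ ℝ ℝ + (v 1 : ℝ) • ContinuousLinearMap.snd ℝ ℝ ℝ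

theorem rowForm_apply (v : Fin 2 → ℤ) (b : ℝ × ℝ) : rowForm v b = v 0 * b.1 + v 1 * b.2 := rfl

theorem rowForm_injective : Function.Injective rowForm := fun v w h => by
  have h0 := DFunLike.congr_fun h (1, 0)
  have h1 := DFunLike.congr_fun h (0, 1)
  simp only [rowForm_apply, mul_one, mul_zero, add_zero, zero_add, Int.cast_inj] at h0 h1
  ext i; fin_cases i <;> assumption

theorem rowForm_apply2 (v : Fin 2 → ℤ) (Φ : Matrix (Fin 2) (Fin 2) ℤ) (b : ℝ × ℝ) :
    rowForm v (apply2 Φ b) = rowForm (v ᵥ* Φ) b := by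
  simp only [rowForm_apply, apply2, vecMul, dotProduct, Fin.sum_univ_two, Int.cast_add,
    Int.cast_mul]
  ring

theorem f_eq_min_rowForm (k p q : ℤ) (b : ℝ × ℝ) :
    f k p q b = min (rowForm (germMatrix k p q 0) b) (rowForm (germMatrix k p q 1) b) := by
  simp only [f, rowForm_apply, germMatrix, of_apply, cons_val_zero, cons_val_one, cons_val_fin_one]
  push_cast
  ring_nf

theorem det_germMatrix (k p q : ℤ) : (germMatrix k p q).det = k * p ^ 2 := by
  simp [germMatrix, det_fin_two_of]

theorem sq_eq_and_dvd_of_germMatrix_mul_eq {k p q k' p' q' : ℤ} {Φ : Matrix (Fin 2) (Fin 2) ℤ}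
    (hn : 0 < k * p ^ 2) (hn' : 0 < k' * p' ^ 2) (hΦ : IsUnit Φ.det)
    (h : germMatrix k p q * Φ = germMatrix k' p' q') :
    k * p ^ 2 = k' * p' ^ 2 ∧ k * p ^ 2 ∣ k * p * q - k' * p' * q' := by
  have hdet : k * p ^ 2 * Φ.det = k' * p' ^ 2 := by
    simpa only [det_mul, det_germMatrix] using congrArg det h
  have e00 : Φ 0 0 = 1 := by
    simpa [germMatrix, mul_apply] using congrFun (congrFun h 0) 0
  have e10 : (1 - k * p * q) * Φ 0 0 + k * p ^ 2 * Φ 1 0 = 1 - k' * p' * q' := by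
    simpa [germMatrix, mul_apply] using congrFun (congrFun h 1) 0
  rw [e00] at e10
  refine ⟨?_, Φ 1 0, by linear_combination -e10⟩
  rcases Int.isUnit_iff.mp hΦ with h1 | h1 <;> rw [h1] at hdet <;> linarith

theorem sq_eq_and_dvd_of_germMatrix_mul_eq_swap {k p q k' p' q' : ℤ}
    {Φ : Matrix (Fin 2) (Fin 2) ℤ} (hn : 0 < k * p ^ 2) (hn' : 0 < k' * p' ^ 2) (hΦ : IsUnit Φ.det)
    (h : germMatrix k p q * Φ = (germMatrix k' p' q').submatrix (Equiv.swap 0 1) id) :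
    k * p ^ 2 = k' * p' ^ 2 ∧ k * p ^ 2 ∣ k * p * q - k' * p' * -q' := by
  have hdet : k * p ^ 2 * Φ.det = -(k' * p' ^ 2) := by
    simpa [det_mul, det_permute, det_germMatrix] using congrArg det h
  have e00 : Φ 0 0 = 1 - k' * p' * q' := by
    simpa [germMatrix, mul_apply] using congrFun (congrFun h 0) 0
  have e10 : (1 - k * p * q) * Φ 0 0 + k * p ^ 2 * Φ 1 0 = 1 := by
    simpa [germMatrix, mul_apply] using congrFun (congrFun h 1) 0
  rw [e00] at e10
  have hsq : k * p ^ 2 = k' * p' ^ 2 := by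
    rcases Int.isUnit_iff.mp hΦ with h1 | h1 <;> rw [h1] at hdet <;> linarith
  -- `1 + k'p'q'` is the inverse of `1 - k'p'q'` modulo `k'p'²`
  refine ⟨hsq, Φ 1 0 * (1 + k' * p' * q') - (1 - k * p * q) * k' * q' ^ 2, ?_⟩
  linear_combination -(1 + k' * p' * q') * e10 + (1 - k * p * q) * k' * q' ^ 2 * hsq

theorem stmt7_general (k k' p q p' q' : ℤ) (hk : 1 ≤ k) (hk' : 1 ≤ k') (hp : 1 ≤ p) (hp' : 1 ≤ p')
    (hpq : Int.gcd p q = 1) (hpq' : Int.gcd p' q' = 1)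
    (Φ : Matrix (Fin 2) (Fin 2) ℤ) (hΦ : IsUnit Φ.det)
    (U D : Set (ℝ × ℝ)) (hU : U ∈ nhds (0 : ℝ × ℝ))
    (hDdense : U ⊆ closure D)
    (heq : ∀ b ∈ D, f k p q (apply2 Φ b) = f k' p' q' b) :
    k = k' ∧ p = p' ∧ (q ≡ q' [ZMOD p] ∨ q ≡ -q' [ZMOD p]) := by
  set M := germMatrix k p q
  set M' := germMatrix k' p' q'
  have hmin : ∀ b ∈ D, min (rowForm (M 0 ᵥ* Φ) b) (rowForm (M 1 ᵥ* Φ) b) =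
      min (rowForm (M' 0) b) (rowForm (M' 1) b) := fun b hb => by
    simpa only [f_eq_min_rowForm, rowForm_apply2] using heq b hb
  have hn : 0 < k * p ^ 2 := by positivity
  have hn' : 0 < k' * p' ^ 2 := by positivity
  have hcop := Int.isCoprime_iff_gcd_eq_one.mpr hpq
  have hcop' := Int.isCoprime_iff_gcd_eq_one.mpr hpq'
  rcases ContinuousLinearMap.eq_or_swap_of_min_apply_eq_near_zero hU hDdense hmin with
    ⟨h0, h1⟩ | ⟨h0, h1⟩
  · have hM : M * Φ = M' := by
      ext i j; fin_cases i
      exacts [congrFun (rowForm_injective h0) j, congrFun (rowForm_injective h1) j]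
    obtain ⟨hsq, hdvd⟩ := sq_eq_and_dvd_of_germMatrix_mul_eq hn hn' hΦ hM
    obtain ⟨rfl, rfl, hmod⟩ := Int.eq_and_modEq_of_mul_sq_eq_of_dvd (by positivity)
      (by positivity) (by positivity) hcop hcop' hsq hdvd
    exact ⟨rfl, rfl, .inl hmod⟩
  · have hM : M * Φ = M'.submatrix (Equiv.swap 0 1) id := by
      ext i j; fin_cases i
      exacts [congrFun (rowForm_injective h0) j, congrFun (rowForm_injective h1) j]
    obtain ⟨hsq, hdvd⟩ := sq_eq_and_dvd_of_germMatrix_mul_eq_swap hn hn' hΦ hM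
    obtain ⟨rfl, rfl, hmod⟩ := Int.eq_and_modEq_of_mul_sq_eq_of_dvd (by positivity)
      (by positivity) (by positivity) hcop hcop'.neg_right hsq hdvd
    exact ⟨rfl, rfl, .inr hmod⟩

/-- If `Φ ∈ GL(2,ℤ)` intertwines `f_{k,p,q}` and `f_{k',p',q'}` on an open dense subset of some
neighbourhood of 0, then `k = k'`, `p = p'` and `q ≡ ±q' (mod p)`. -/
theorem stmt7 (k k' p q p' q' : ℤ) (hk : 1 ≤ k) (hk' : 1 ≤ k') (hp : 1 ≤ p) (hp' : 1 ≤ p')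
    (hpq : Int.gcd p q = 1) (hpq' : Int.gcd p' q' = 1)
    (Φ : Matrix (Fin 2) (Fin 2) ℤ) (hΦ : IsUnit Φ.det)
    (U D : Set (ℝ × ℝ)) (hU : U ∈ nhds (0 : ℝ × ℝ)) (hDU : D ⊆ U) (hDopen : IsOpen D)
    (hDdense : U ⊆ closure D)
    (heq : ∀ b ∈ D, f k p q (apply2 Φ b) = f k' p' q' b) :
    k = k' ∧ p = p' ∧ (q ≡ q' [ZMOD p] ∨ q ≡ -q' [ZMOD p]) :=
  stmt7_general k k' p q p' q' hk hk' hp hp' hpq hpq' Φ hΦ U D hU hDdense heq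
end

section
/- Let f_{k,p,q}(b) = min{b₁, b₁(1−kpq)+b₂kp²} with k ≥ 1, p ≥ 1, gcd(p,q)=1, and let g(b) = b₁ (the case k=0). Then there is no Φ ∈ GL(2,ℤ) and no a,a' > 0 such that a + f_{k,p,q}(Φ b) = a' + g(b) for all b in a neighbourhood of 0 in ℝ². -/
/-- For `k ≥ 1`, no `Φ ∈ GL(2,ℤ)` and shifts `a, a' > 0` make `a + f_{k,p,q}∘Φ` equal to the
linear germ `a' + b₁` on a neighbourhood of 0. -/
theorem stmt8 (k p q : ℤ) (hk : 1 ≤ k) (hp : 1 ≤ p) (hpq : Int.gcd p q = 1) :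
    ¬ ∃ (Φ : Matrix (Fin 2) (Fin 2) ℤ) (a a' : ℝ), IsUnit Φ.det ∧ 0 < a ∧ 0 < a' ∧
      ∃ U ∈ nhds (0 : ℝ × ℝ), ∀ b ∈ U, a + f k p q (apply2 Φ b) = a' + b.1 := by
  rintro ⟨Φ, a, a', hdet, ha, ha', U, hU, hEq⟩
  obtain ⟨ε, hε, hball⟩ := Metric.mem_nhds_iff.mp hU
  set t : ℝ := ε / 2 with ht
  have ht0 : 0 < t := by positivity
  have hmem : ∀ s : ℝ, |s| ≤ t → ((0 : ℝ), s) ∈ U := by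
    intro s hs
    apply hball
    simp only [Metric.mem_ball, Prod.dist_eq, dist_zero_right]
    have : dist s 0 ≤ t := by simpa [Real.dist_eq] using hs
    simp only [dist_zero_right] at this ⊢
    have : max ‖(0:ℝ)‖ ‖s‖ ≤ t := by simpa using this
    calc max ‖(0:ℝ)‖ ‖s‖ ≤ t := this
      _ < ε := by rw [ht]; linarith
  -- at b = 0 : a = a'
  have h0 : a = a' := by
    have := hEq ((0:ℝ), 0) (hmem 0 (by simpa using le_of_lt ht0))
    simpa [f, apply2] using this
  -- x, y values at b = (0, t)
  set x : ℝ := (Φ 0 1 : ℝ) * t with hx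
  set y : ℝ := ((Φ 0 1 : ℝ) * t) * (1 - (k : ℝ) * (p : ℝ) * (q : ℝ))
      + ((Φ 1 1 : ℝ) * t) * ((k : ℝ) * (p : ℝ) ^ 2) with hy
  have h1 : min x y = 0 := by
    have := hEq ((0:ℝ), t) (hmem t (abs_of_pos ht0).le)
    simp only [f, apply2] at this
    rw [h0] at this
    have h' : min x y = 0 := by
      have := sub_eq_zero.mpr this
      rw [hx, hy]; ring_nf; ring_nf at this; linarith
    exact h'
  have h2 : min (-x) (-y) = 0 := by
    have := hEq ((0:ℝ), -t) (hmem (-t) (by rw [abs_neg, abs_of_pos ht0]))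
    simp only [f, apply2] at this
    rw [h0] at this
    rw [hx, hy]
    have := sub_eq_zero.mpr this
    ring_nf; ring_nf at this
    linarith [this]
  have hxy : x = 0 ∧ y = 0 := by
    constructor
    · have h1x : (0:ℝ) ≤ x := h1 ▸ min_le_left x y
      have h2x : (0:ℝ) ≤ -x := h2 ▸ min_le_left (-x) (-y)
      linarith
    · have h1y : (0:ℝ) ≤ y := h1 ▸ min_le_right x y
      have h2y : (0:ℝ) ≤ -y := h2 ▸ min_le_right (-x) (-y)
      linarith
  have hΦ01 : (Φ 0 1 : ℝ) = 0 := by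
    rcases mul_eq_zero.mp hxy.1 with h | h
    · exact h
    · exact absurd h (ne_of_gt ht0)
  have hΦ11 : (Φ 1 1 : ℝ) = 0 := by
    have hy0 := hxy.2
    rw [hy, hΦ01] at hy0
    have hk0 : (k : ℝ) ≠ 0 := by positivity
    have hp0 : (p : ℝ) ≠ 0 := by positivity
    have : ((Φ 1 1 : ℝ) * t) * ((k : ℝ) * (p : ℝ) ^ 2) = 0 := by linarith [hy0]
    rcases mul_eq_zero.mp this with h | h
    · rcases mul_eq_zero.mp h with h' | h'
      · exact h'
      · exact absurd h' (ne_of_gt ht0)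
    · rcases mul_eq_zero.mp h with h' | h'
      · exact absurd h' hk0
      · exact absurd h' (pow_ne_zero 2 hp0)
  have h01 : Φ 0 1 = 0 := by exact_mod_cast hΦ01
  have h11 : Φ 1 1 = 0 := by exact_mod_cast hΦ11
  rw [Matrix.det_fin_two, h01, h11] at hdet
  simp at hdet
end

section
/- Let γ : [0,1] → M be a continuous path in a metric space (M,d), let A ⊆ M be nonempty with d(γ(0), A) = 0 and d(γ(1), A) ≥ δ > 0, and let r₀ > 0, N = ⌊δ/(2r₀)⌋, δ_r = δ − 2r₀N. Then there exist points x₀,…,x_N on the image of γ such that the open balls B(x_n, r₀) for 0 ≤ n < N together with B(x_N, δ_r/2) are pairwise disjoint. -/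
/-- Along a continuous path starting at distance 0 from `A` and ending at distance `≥ δ` from
`A`, one can place `N = ⌊δ/(2r₀)⌋` pairwise disjoint balls of radius `r₀` and one further
disjoint ball of radius `δ_r/2`, all centered on the image of the path. -/
theorem stmt12 {M : Type*} [MetricSpace M] (γ : ℝ → M) (hγ : ContinuousOn γ (Set.Icc 0 1))
    (A : Set M) (hA : A.Nonempty) (δ r₀ : ℝ) (hδ : 0 < δ) (hr : 0 < r₀)
    (h0 : Metric.infDist (γ 0) A = 0) (h1 : δ ≤ Metric.infDist (γ 1) A) :
    ∃ x : Fin (⌊δ / (2 * r₀)⌋₊ + 1) → M,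
      (∀ i, x i ∈ γ '' Set.Icc 0 1) ∧
      ∀ i j, i ≠ j →
        Disjoint
          (Metric.ball (x i)
            (if (i : ℕ) < ⌊δ / (2 * r₀)⌋₊ then r₀
             else (δ - 2 * r₀ * (⌊δ / (2 * r₀)⌋₊ : ℝ)) / 2))
          (Metric.ball (x j)
            (if (j : ℕ) < ⌊δ / (2 * r₀)⌋₊ then r₀
             else (δ - 2 * r₀ * (⌊δ / (2 * r₀)⌋₊ : ℝ)) / 2)) := by
  set N := ⌊δ / (2 * r₀)⌋₊ with hNdef
  have hf : ContinuousOn (fun t => Metric.infDist (γ t) A) (Set.Icc 0 1) :=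
    (Metric.continuous_infDist_pt A).comp_continuousOn hγ
  have hNle : 2 * r₀ * (N : ℝ) ≤ δ := by
    have h2r : (0:ℝ) < 2 * r₀ := by linarith
    have := Nat.floor_le (le_of_lt (div_pos hδ h2r))
    rw [← hNdef] at this
    calc 2 * r₀ * (N : ℝ) ≤ 2 * r₀ * (δ / (2 * r₀)) := by
          exact mul_le_mul_of_nonneg_left this (le_of_lt h2r)
      _ = δ := by field_simp
  have hδr : 0 ≤ δ - 2 * r₀ * (N : ℝ) := by linarith
  have hN0 : (0:ℝ) ≤ (N : ℝ) := Nat.cast_nonneg N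
  set v : Fin (N + 1) → ℝ := fun n =>
    if (n : ℕ) < N then (2 * (n : ℕ) + 1) * r₀
    else 2 * r₀ * (N : ℝ) + (δ - 2 * r₀ * (N : ℝ)) / 2 with hv
  have hv0 : ∀ n, 0 ≤ v n := by
    intro n; simp only [hv]
    split
    · positivity
    · nlinarith
  have hvδ : ∀ n, v n ≤ δ := by
    intro n; simp only [hv]
    split
    · rename_i h
      have : ((n : ℕ) : ℝ) + 1 ≤ (N : ℝ) := by exact_mod_cast Nat.succ_le_of_lt h
      nlinarith
    · linarith
  have hexists : ∀ n : Fin (N + 1), ∃ s ∈ Set.Icc (0:ℝ) 1,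
      Metric.infDist (γ s) A = v n := by
    intro n
    have hmem : v n ∈ Set.Icc (Metric.infDist (γ 0) A) (Metric.infDist (γ 1) A) := by
      rw [h0]; exact ⟨hv0 n, le_trans (hvδ n) h1⟩
    obtain ⟨s, hs, hfs⟩ := intermediate_value_Icc (zero_le_one) hf hmem
    exact ⟨s, hs, hfs⟩
  choose t ht hft using hexists
  refine ⟨fun n => γ (t n), fun n => ⟨t n, ht n, rfl⟩, ?_⟩
  set rad : Fin (N + 1) → ℝ := fun n =>
    if (n : ℕ) < N then r₀ else (δ - 2 * r₀ * (N : ℝ)) / 2 with hrad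
  have key : ∀ a b : Fin (N + 1), (a : ℕ) < (b : ℕ) → rad a + rad b ≤ v b - v a := by
    intro a b hab
    have haN : (a : ℕ) < N := lt_of_lt_of_le hab (Nat.lt_succ_iff.mp b.isLt)
    have haNR : ((a : ℕ) : ℝ) + 1 ≤ (N : ℝ) := by exact_mod_cast Nat.succ_le_of_lt haN
    simp only [hv, hrad, if_pos haN]
    by_cases hbN : (b : ℕ) < N
    · simp only [if_pos hbN]
      have : ((a : ℕ) : ℝ) + 1 ≤ ((b : ℕ) : ℝ) := by exact_mod_cast Nat.succ_le_of_lt hab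
      nlinarith
    · simp only [if_neg hbN]
      nlinarith
  have hdist : ∀ a b : Fin (N + 1), v a - v b ≤ dist (γ (t a)) (γ (t b)) := by
    intro a b
    rw [← hft a, ← hft b]
    have := Metric.infDist_le_infDist_add_dist (x := γ (t a)) (y := γ (t b)) (s := A)
    linarith
  intro i j hij
  have hne : (i : ℕ) ≠ (j : ℕ) := fun h => hij (Fin.ext h)
  have main : ∀ a b : Fin (N + 1), (a : ℕ) < (b : ℕ) →
      Disjoint (Metric.ball (γ (t a)) (rad a)) (Metric.ball (γ (t b)) (rad b)) := by
    intro a b hab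
    apply Metric.ball_disjoint_ball
    have h1' := key a b hab
    have h2' := hdist b a
    calc rad a + rad b ≤ v b - v a := h1'
      _ ≤ dist (γ (t b)) (γ (t a)) := h2'
      _ = dist (γ (t a)) (γ (t b)) := dist_comm _ _
  rcases lt_or_gt_of_ne hne with h | h
  · exact main i j h
  · exact (main j i h).symm
end
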